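/- arXiv:2405.02939 — 6 statements merged into one kernel-verified Lean document; each statement's English description precedes it below -/
import Mathlib

section
/- If λ = (λ_1, ..., λ_n) lies in the Gårding cone Γ_k and λ_1 ≥ λ_2 ≥ ... ≥ λ_n, then 0 < σ_{k-1}(λ|1) ≤ σ_{k-1}(λ|2) ≤ ... ≤ σ_{k-1}(λ|n). -/
/-
Differentiating `∏ i, (X + λ i)` exactly `n - k` times leaves, by Rolle's theorem, a real-rooted
polynomial of degree `k` whose coefficients are positive multiples of `σ_0, …, σ_k`. So if
`σ_1, …, σ_k ≥ 0` and `σ_k > 0`, its roots are negative and in fact all of `σ_1, …, σ_k` are `> 0`.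

This gives `λ ∈ Γ_k → λ|i ∈ Γ_{k-1}` by induction on `k`: if `σ_{k-1}(λ|i) ≤ 0`, lower `λ_i` by
`t = min_{j<k} σ_j(λ) / σ_{j-1}(λ|i)`. As `σ_j(λ) = σ_j(λ|i) + λ_i σ_{j-1}(λ|i)`, every `σ_j`,
`j ≤ k`, stays nonnegative and `σ_k` stays positive, while the minimising `σ_j` vanishes:
this contradicts the first step.

Finally `σ_{k-1}(λ|i) - σ_{k-1}(λ|j) = (λ_j - λ_i) σ_{k-2}(λ|ij)`, and `σ_{k-2}(λ|ij) > 0` since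
`λ|ij ∈ Γ_{k-2}`.
-/

open Finset

noncomputable def esym {n : ℕ} (k : ℕ) (lam : Fin n → ℝ) : ℝ :=
  ∑ s ∈ Finset.univ.powersetCard k, ∏ i ∈ s, lam i

noncomputable def esym1 {n : ℕ} (k : ℕ) (lam : Fin n → ℝ) (i : Fin n) : ℝ :=
  ∑ s ∈ (Finset.univ.erase i).powersetCard k, ∏ j ∈ s, lam j

noncomputable def esym2 {n : ℕ} (k : ℕ) (lam : Fin n → ℝ) (i j : Fin n) : ℝ :=
  ∑ s ∈ ((Finset.univ.erase i).erase j).powersetCard k, ∏ l ∈ s, lam l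

def GardingCone (n k : ℕ) : Set (Fin n → ℝ) :=
  {lam | ∀ j : ℕ, 1 ≤ j → j ≤ k → 0 < esym j lam}

open Polynomial

theorem Multiset.esymm_pos {R : Type*} [CommSemiring R] [PartialOrder R] [IsStrictOrderedRing R]
    {s : Multiset R} (hs : ∀ x ∈ s, 0 < x) {j : ℕ} (hj : j ≤ Multiset.card s) :
    0 < s.esymm j := by
  have hne : s.powersetCard j ≠ 0 := by
    rw [← Multiset.card_pos, Multiset.card_powersetCard]
    exact Nat.choose_pos hj
  simpa [Multiset.esymm] using
    Multiset.sum_lt_sum_of_nonempty (f := fun _ => (0 : R)) hne fun t ht => Multiset.prod_pos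
      fun x hx => hs x (Multiset.mem_of_le (Multiset.mem_powersetCard.1 ht).1 hx)

namespace Polynomial

theorem neg_of_mem_roots_of_coeff_nonneg {p : ℝ[X]} (hnonneg : ∀ d, 0 ≤ p.coeff d)
    (h0 : 0 < p.coeff 0) {r : ℝ} (hr : r ∈ p.roots) : r < 0 := by
  by_contra! hr0
  have hpos : 0 < p.eval r := by
    rw [eval_eq_sum_range]
    exact Finset.sum_pos' (fun d _ => mul_nonneg (hnonneg d) (pow_nonneg hr0 d))
      ⟨0, by simp, by simpa using h0⟩
  exact hpos.ne' (isRoot_of_mem_roots hr)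

theorem coeff_pos_of_coeff_nonneg_of_card_roots {p : ℝ[X]}
    (hroots : Multiset.card p.roots = p.natDegree) (hnonneg : ∀ d, 0 ≤ p.coeff d)
    (h0 : 0 < p.coeff 0) {d : ℕ} (hd : d ≤ p.natDegree) : 0 < p.coeff d := by
  have hlc : 0 < p.leadingCoeff :=
    (hnonneg _).lt_of_ne' (leadingCoeff_ne_zero.2 (fun hp => by simp [hp] at h0))
  have hesymm : 0 < (p.roots.map Neg.neg).esymm (p.natDegree - d) :=
    Multiset.esymm_pos (fun x hx => by
      obtain ⟨r, hr, rfl⟩ := Multiset.mem_map.1 hx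
      exact neg_pos.2 (neg_of_mem_roots_of_coeff_nonneg hnonneg h0 hr)) (by simp [hroots])
  rw [coeff_eq_esymm_roots_of_card hroots hd, mul_assoc, ← Multiset.esymm_neg]
  exact mul_pos hlc hesymm

theorem card_roots_sub_le_card_roots_iterate_derivative (p : ℝ[X]) (m : ℕ) :
    Multiset.card p.roots - m ≤ Multiset.card (derivative^[m] p).roots := by
  induction m with
  | zero => simp
  | succ m ih =>
    rw [Function.iterate_succ_apply']
    have := card_roots_le_derivative (derivative^[m] p)
    omega

end Polynomial

-- `esym k lam` and `esym1 k lam i` are `esymOn univ k lam` and `esymOn (univ.erase i) k lam`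
-- by definition.
noncomputable def esymOn {ι : Type*} (A : Finset ι) (j : ℕ) (lam : ι → ℝ) : ℝ :=
  ∑ s ∈ A.powersetCard j, ∏ i ∈ s, lam i

section

variable {ι : Type*} {A : Finset ι} {lam : ι → ℝ}

@[simp]
theorem esymOn_zero : esymOn A 0 lam = 1 := by
  simp [esymOn]

theorem le_card_of_esymOn_ne_zero {j : ℕ} (h : esymOn A j lam ≠ 0) : j ≤ #A := by
  by_contra! hj
  exact h (by simp [esymOn, powersetCard_eq_empty.2 hj])

theorem esymOn_congr {mu : ι → ℝ} (j : ℕ) (h : ∀ i ∈ A, lam i = mu i) :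
    esymOn A j lam = esymOn A j mu :=
  sum_congr rfl fun _ hs => prod_congr rfl fun i hi => h i ((mem_powersetCard.1 hs).1 hi)

theorem coeff_prod_X_add_C_eq_esymOn {j : ℕ} (hj : j ≤ #A) :
    (∏ i ∈ A, (X + C (lam i))).coeff (#A - j) = esymOn A j lam := by
  rw [Finset.prod_X_add_C_coeff _ _ (Nat.sub_le _ _), Nat.sub_sub_self hj, esymOn]

theorem coeff_iterate_derivative_prod_X_add_C {k j : ℕ} (hjk : j ≤ k) (hk : k ≤ #A) :
    (derivative^[#A - k] (∏ i ∈ A, (X + C (lam i)))).coeff (k - j) =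
      (#A - j).descFactorial (#A - k) * esymOn A j lam := by
  rw [coeff_iterate_derivative, nsmul_eq_mul, show k - j + (#A - k) = #A - j by omega,
    coeff_prod_X_add_C_eq_esymOn (hjk.trans hk)]

theorem esymOn_pos_of_nonneg {k : ℕ} (hnonneg : ∀ j ≤ k, 0 ≤ esymOn A j lam)
    (hk : 0 < esymOn A k lam) : ∀ j ≤ k, 0 < esymOn A j lam := by
  have hkA : k ≤ #A := le_card_of_esymOn_ne_zero hk.ne'
  set f : ℝ[X] := ∏ i ∈ A, (X + C (lam i))
  set g := derivative^[#A - k] f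
  have hdesc : ∀ j ≤ k, (0 : ℝ) < (#A - j).descFactorial (#A - k) := fun j hj => by
    exact_mod_cast Nat.descFactorial_pos.2 (by omega)
  have hcoeff : ∀ d ≤ k,
      g.coeff d = (#A - (k - d)).descFactorial (#A - k) * esymOn A (k - d) lam := fun d hd => by
    rw [← coeff_iterate_derivative_prod_X_add_C (Nat.sub_le k d) hkA, Nat.sub_sub_self hd]
  have hfdeg : f.natDegree = #A := by
    simp [f, natDegree_prod_of_monic _ _ fun i _ => monic_X_add_C (lam i)]
  have hfroots : Multiset.card f.roots = #A :=
    hfdeg ▸ (Splits.prod fun i _ => Splits.X_add_C (lam i)).natDegree_eq_card_roots.symm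
  have hdeg : g.natDegree = k := by
    refine le_antisymm ((natDegree_iterate_derivative f _).trans (by omega)) ?_
    refine le_natDegree_of_ne_zero (ne_of_gt ?_)
    rw [hcoeff k le_rfl, Nat.sub_self, esymOn_zero, mul_one]
    exact hdesc 0 (Nat.zero_le k)
  have hroots : Multiset.card g.roots = g.natDegree := by
    have hrolle : Multiset.card f.roots - (#A - k) ≤ Multiset.card g.roots :=
      card_roots_sub_le_card_roots_iterate_derivative f (#A - k)
    exact le_antisymm (card_roots' g) (by omega)
  have hgnonneg : ∀ d, 0 ≤ g.coeff d := by
    intro d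
    rcases le_or_gt d k with hd | hd
    · rw [hcoeff d hd]
      exact mul_nonneg (hdesc _ (Nat.sub_le k d)).le (hnonneg _ (Nat.sub_le k d))
    · rw [coeff_eq_zero_of_natDegree_lt (hdeg ▸ hd)]
  have hg0 : 0 < g.coeff 0 := by
    rw [hcoeff 0 (Nat.zero_le k)]
    exact mul_pos (hdesc _ (Nat.sub_le k 0)) hk
  intro j hj
  have hgpos := coeff_pos_of_coeff_nonneg_of_card_roots hroots hgnonneg hg0 (d := k - j) (by omega)
  rw [hcoeff _ (Nat.sub_le k j), Nat.sub_sub_self hj] at hgpos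
  exact pos_of_mul_pos_right hgpos (hdesc j hj).le

variable [DecidableEq ι] {i : ι}

theorem esymOn_insert {B : Finset ι} (hi : i ∉ B) (j : ℕ) :
    esymOn (insert i B) (j + 1) lam = esymOn B (j + 1) lam + lam i * esymOn B j lam := by
  rw [esymOn, powersetCard_succ_insert hi, sum_union, sum_image, esymOn, esymOn, mul_sum]
  · refine congrArg _ (sum_congr rfl fun s hs => prod_insert ?_)
    exact fun his => hi ((mem_powersetCard.1 hs).1 his)
  · intro s hs t ht hst
    have hsi : i ∉ s := fun h => hi ((mem_powersetCard.1 hs).1 h)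
    have hti : i ∉ t := fun h => hi ((mem_powersetCard.1 ht).1 h)
    simpa [erase_insert hsi, erase_insert hti] using congrArg (·.erase i) hst
  · refine disjoint_left.2 fun s hs hs' => ?_
    obtain ⟨t, -, rfl⟩ := mem_image.1 hs'
    exact hi ((mem_powersetCard.1 hs).1 (mem_insert_self i t))

theorem esymOn_erase (hi : i ∈ A) (j : ℕ) :
    esymOn A (j + 1) lam =
      esymOn (A.erase i) (j + 1) lam + lam i * esymOn (A.erase i) j lam := by
  conv_lhs => rw [← insert_erase hi]
  exact esymOn_insert (notMem_erase i A) j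

theorem esymOn_update_sub (hi : i ∈ A) (t : ℝ) (j : ℕ) :
    esymOn A (j + 1) (Function.update lam i (lam i - t)) =
      esymOn A (j + 1) lam - t * esymOn (A.erase i) j lam := by
  have hB : ∀ l, esymOn (A.erase i) l (Function.update lam i (lam i - t)) =
      esymOn (A.erase i) l lam :=
    fun l => esymOn_congr l fun x hx => Function.update_of_ne (ne_of_mem_erase hx) _ _
  rw [esymOn_erase hi, esymOn_erase hi, hB, hB, Function.update_self]
  ring

theorem esymOn_erase_sub_esymOn_erase {j : ι} (hi : i ∈ A) (hj : j ∈ A) (hij : i ≠ j)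
    (m : ℕ) : esymOn (A.erase i) (m + 1) lam - esymOn (A.erase j) (m + 1) lam =
      (lam j - lam i) * esymOn ((A.erase i).erase j) m lam := by
  rw [esymOn_erase (mem_erase.2 ⟨hij.symm, hj⟩), esymOn_erase (mem_erase.2 ⟨hij, hi⟩),
    erase_right_comm]
  ring

theorem esymOn_erase_pos_of_lt {k : ℕ} (hA : ∀ j ≤ k + 1, 0 < esymOn A j lam) (hi : i ∈ A)
    (hB : ∀ j < k, 0 < esymOn (A.erase i) j lam) : 0 < esymOn (A.erase i) k lam := by
  rcases Nat.eq_zero_or_pos k with rfl | hk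
  · simp
  by_contra! hneg
  obtain ⟨j₀, hj₀, hmin⟩ := exists_min_image (range k)
    (fun j => esymOn A (j + 1) lam / esymOn (A.erase i) j lam) (nonempty_range_iff.2 hk.ne')
  rw [mem_range] at hj₀
  set t := esymOn A (j₀ + 1) lam / esymOn (A.erase i) j₀ lam
  set nu := Function.update lam i (lam i - t)
  have ht : 0 < t := div_pos (hA _ (by omega)) (hB j₀ hj₀)
  have htop : 0 < esymOn A (k + 1) nu := by
    rw [esymOn_update_sub hi]
    nlinarith [hA (k + 1) le_rfl]
  have hnonneg : ∀ j ≤ k + 1, 0 ≤ esymOn A j nu := by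
    rintro (_ | j) hj
    · simp
    rcases (Nat.lt_succ_iff.1 hj).lt_or_eq with hjk | rfl
    · have hle := hmin j (mem_range.2 hjk)
      rw [le_div_iff₀ (hB j hjk)] at hle
      rw [esymOn_update_sub hi]
      linarith
    · exact htop.le
  have hzero : esymOn A (j₀ + 1) nu = 0 := by
    rw [esymOn_update_sub hi, div_mul_cancel₀ _ (hB j₀ hj₀).ne', sub_self]
  exact (esymOn_pos_of_nonneg hnonneg htop (j₀ + 1) (by omega)).ne' hzero

theorem esymOn_erase_pos {k : ℕ} (hA : ∀ j ≤ k + 1, 0 < esymOn A j lam) (hi : i ∈ A) :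
    ∀ j ≤ k, 0 < esymOn (A.erase i) j lam := by
  induction k with
  | zero => simp
  | succ k ih =>
    have hB := ih fun j hj => hA j (by omega)
    intro j hj
    rcases hj.lt_or_eq with hjk | rfl
    · exact hB j (by omega)
    · exact esymOn_erase_pos_of_lt hA hi fun j hj => hB j (by omega)

theorem esymOn_erase_le_esymOn_erase {k : ℕ} (hA : ∀ j ≤ k, 0 < esymOn A j lam) {j : ι}
    (hi : i ∈ A) (hj : j ∈ A) (hlam : lam j ≤ lam i) :
    esymOn (A.erase i) (k - 1) lam ≤ esymOn (A.erase j) (k - 1) lam := by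
  obtain rfl | hij := eq_or_ne i j
  · rfl
  obtain hk | ⟨m, rfl⟩ : k ≤ 1 ∨ ∃ m, k = m + 2 := by
    rcases k with _ | _ | m <;> simp
  · simp [Nat.sub_eq_zero_of_le hk]
  have hpos : 0 < esymOn ((A.erase i).erase j) m lam :=
    esymOn_erase_pos (esymOn_erase_pos hA hi) (mem_erase.2 ⟨hij.symm, hj⟩) m le_rfl
  have hdiff := esymOn_erase_sub_esymOn_erase (lam := lam) hi hj hij m
  change esymOn _ (m + 1) lam ≤ esymOn _ (m + 1) lam
  nlinarith

end

theorem stmt2 {n : ℕ} (k : ℕ) (hk : 1 ≤ k) (hkn : k ≤ n) (lam : Fin n → ℝ)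
    (hG : lam ∈ GardingCone n k) (hsort : Antitone lam) :
    0 < esym1 (k - 1) lam ⟨0, by omega⟩ ∧
      ∀ i j : Fin n, i ≤ j → esym1 (k - 1) lam i ≤ esym1 (k - 1) lam j := by
  have hA : ∀ j ≤ k, 0 < esymOn univ j lam := by
    rintro (_ | j) hj
    · simp
    · exact hG (j + 1) (by omega) hj
  obtain ⟨k, rfl⟩ : ∃ k', k = k' + 1 := ⟨k - 1, by omega⟩
  exact ⟨esymOn_erase_pos hA (mem_univ _) k le_rfl, fun i j hij =>
    esymOn_erase_le_esymOn_erase hA (mem_univ i) (mem_univ j) (hsort hij)⟩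
end

section
/- If λ = (λ_1, ..., λ_n) ∈ Γ_k, then Σ_{i=1}^n λ_i² · σ_{k-1}(λ|i) ≥ (k/n) · σ_1(λ) · σ_k(λ). -/
open Finset

/-!
Since `λ_i σ_{k-1}(λ|i) = σ_k(λ) - σ_k(λ|i)`, the left-hand side equals
`σ_1 σ_k - (k+1) σ_{k+1}`, so the claim is `n (k+1) σ_{k+1} ≤ (n-k) σ_1 σ_k`. In terms of the
normalized means `P_j = σ_j / (n choose j)` this is `P_{k+1} ≤ P_1 P_k`, which follows on `Γ_k` by
induction on `k` from Newton's inequalities `P_j^2 ≥ P_{j-1} P_{j+1}`. These hold for the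
coefficients of any real-rooted polynomial, here `∏ (1 + λ_i X)`: differentiation and reflection
preserve real-rootedness and reduce the inequality to a quadratic, where it is the nonnegativity
of the discriminant.
-/

open Polynomial

namespace Polynomial

theorem Splits.reverse {K : Type*} [Field K] {p : K[X]} (hp : p.Splits) : p.reverse.Splits := by
  induction hp using Submonoid.closure_induction with
  | mem f hf =>
    refine Splits.of_natDegree_le_one ((reverse_natDegree_le f).trans ?_)
    rcases hf with ⟨a, rfl⟩ | ⟨a, rfl⟩ <;> simp
  | one => exact Splits.of_natDegree_le_one ((reverse_natDegree_le 1).trans (by simp))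
  | mul f g _ _ hf hg => rw [reverse_mul_of_domain]; exact hf.mul hg

theorem Splits.reflect {K : Type*} [Field K] {p : K[X]} (hp : p.Splits) {N : ℕ}
    (hN : p.natDegree ≤ N) : (p.reflect N).Splits := by
  -- `reflect N p = p.reverse * X ^ (N - p.natDegree)`
  have h := reflect_mul p 1 le_rfl (G := N - p.natDegree) (by simp)
  rw [mul_one, Nat.add_sub_cancel' hN] at h
  rw [h]
  exact hp.reverse.mul (by simp)

theorem Splits.derivative {p : ℝ[X]} (hp : p.Splits) : (derivative p).Splits := by
  rw [splits_iff_card_roots] at hp ⊢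
  have hrolle := card_roots_le_derivative p
  have hroots := card_roots' (Polynomial.derivative p)
  have hdeg := natDegree_derivative_le p
  omega

theorem Splits.iterate_derivative {p : ℝ[X]} (hp : p.Splits) (m : ℕ) :
    (Polynomial.derivative^[m] p).Splits := by
  induction m with
  | zero => exact hp
  | succ m ih => rw [Function.iterate_succ_apply']; exact ih.derivative

theorem Splits.discrim_nonneg {K : Type*} [Field K] [LinearOrder K] [IsStrictOrderedRing K]
    {q : K[X]} (hq : q.Splits) (hdeg : q.natDegree ≤ 2) :
    0 ≤ discrim (q.coeff 2) (q.coeff 1) (q.coeff 0) := by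
  rcases hdeg.lt_or_eq with hlt | heq
  · rw [coeff_eq_zero_of_natDegree_lt hlt, discrim]
    nlinarith [sq_nonneg (q.coeff 1)]
  · obtain ⟨x, hx⟩ := hq.exists_eval_eq_zero
      (by rw [degree_eq_natDegree (by rintro rfl; simp at heq), heq]; decide)
    rw [eval_eq_sum_range, heq] at hx
    rw [discrim_eq_sq_of_quadratic_eq_zero (x := x)
      (by simp [Finset.sum_range_succ] at hx; linear_combination hx)]
    positivity

end Polynomial

/-- Newton's inequality `b_{u+1}^2 ≥ b_u b_{u+2}` for `b_j = a_j / (N choose j)`, with the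
binomial coefficients cleared. -/
def NewtonIneqAt (a : ℕ → ℝ) (N u : ℕ) : Prop :=
  ((u : ℝ) + 2) * (N - u) * (a u * a (u + 2)) ≤ ((u : ℝ) + 1) * (N - u - 1) * a (u + 1) ^ 2

namespace NewtonIneqAt

theorem of_derivative {p : ℝ[X]} {N u : ℕ} (h : NewtonIneqAt (derivative p).coeff N u) :
    NewtonIneqAt p.coeff (N + 1) (u + 1) := by
  unfold NewtonIneqAt at *
  simp only [coeff_derivative, show u + 2 + 1 = u + 1 + 2 from rfl] at h
  push_cast at h ⊢
  have hpos : (0 : ℝ) < (u + 1) * (u + 2) := by positivity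
  refine le_of_mul_le_mul_left ?_ hpos
  linear_combination h

theorem of_iterate_derivative {p : ℝ[X]} {N u m : ℕ}
    (h : NewtonIneqAt (derivative^[m] p).coeff N u) : NewtonIneqAt p.coeff (N + m) (u + m) := by
  induction m generalizing p with
  | zero => exact h
  | succ m ih =>
    rw [Function.iterate_succ_apply] at h
    exact (ih h).of_derivative

end NewtonIneqAt

namespace Polynomial

theorem Splits.newtonIneqAt_two {q : ℝ[X]} (hq : q.Splits) (hdeg : q.natDegree ≤ 2) :
    NewtonIneqAt q.coeff 2 0 := by
  have hdisc := hq.discrim_nonneg hdeg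
  unfold NewtonIneqAt discrim at *
  norm_num
  linarith

theorem Splits.newtonIneqAt_top {q : ℝ[X]} (hq : q.Splits) {N : ℕ}
    (hdeg : q.natDegree ≤ N + 2) :
    NewtonIneqAt q.coeff (N + 2) N := by
  have h := (hq.iterate_derivative N).newtonIneqAt_two
    ((natDegree_iterate_derivative q N).trans (by omega))
  simpa only [zero_add, add_comm 2 N] using h.of_iterate_derivative

theorem Splits.newtonIneqAt_zero {q : ℝ[X]} (hq : q.Splits) {N : ℕ}
    (hdeg : q.natDegree ≤ N + 2) :
    NewtonIneqAt q.coeff (N + 2) 0 := by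
  have h := (hq.reflect hdeg).newtonIneqAt_top (natDegree_reflect_le.trans (max_le le_rfl hdeg))
  unfold NewtonIneqAt at *
  simp only [coeff_reflect, revAt_le (show N ≤ N + 2 by omega),
    revAt_le (show N + 1 ≤ N + 2 by omega), revAt_le le_rfl, Nat.add_sub_cancel_left,
    Nat.sub_self, show N + 2 - (N + 1) = 1 by omega] at h
  push_cast at h ⊢
  linear_combination h

theorem Splits.newtonIneqAt {p : ℝ[X]} (hp : p.Splits) {N : ℕ} (hdeg : p.natDegree ≤ N)
    (u : ℕ) : NewtonIneqAt p.coeff N u := by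
  by_cases hu : u + 2 ≤ N
  · obtain ⟨M, rfl⟩ : ∃ M, N = M + 2 + u := ⟨N - u - 2, by omega⟩
    have h := (hp.iterate_derivative u).newtonIneqAt_zero
      ((natDegree_iterate_derivative p u).trans (by omega : p.natDegree - u ≤ M + 2))
    simpa only [zero_add] using h.of_iterate_derivative
  · have h2 : p.coeff (u + 2) = 0 := coeff_eq_zero_of_natDegree_lt (by omega)
    unfold NewtonIneqAt
    rw [h2, mul_zero, mul_zero]
    rcases Nat.lt_or_ge N (u + 1) with h1 | h1
    · rw [coeff_eq_zero_of_natDegree_lt (by omega : p.natDegree < u + 1)]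
      simp
    · have hfac : (0 : ℝ) ≤ N - u - 1 := by
        rw [sub_sub, sub_nonneg]; exact_mod_cast h1
      positivity

end Polynomial

theorem coeff_reflect_prod_X_add_C {n : ℕ} (lam : Fin n → ℝ) (u : ℕ) :
    (reflect n (∏ t, (X + C (lam t)))).coeff u = esym u lam := by
  rw [coeff_reflect]
  rcases le_or_gt u n with hu | hu
  · rw [revAt_le hu, Finset.prod_X_add_C_coeff _ _ (by simp), card_univ, Fintype.card_fin,
      Nat.sub_sub_self hu]
    rfl
  · rw [revAt_eq_self_of_lt hu, esym,
      powersetCard_eq_empty.2 (by simpa using hu), sum_empty]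
    refine coeff_eq_zero_of_natDegree_lt ((natDegree_prod_le _ _).trans_lt ?_)
    simpa using hu

theorem esym_newtonIneqAt {n : ℕ} (lam : Fin n → ℝ) (u : ℕ) :
    NewtonIneqAt (esym · lam) n u := by
  have hsplits : (∏ t, (X + C (lam t))).Splits := Splits.prod fun t _ => Splits.X_add_C (lam t)
  have hdeg : (∏ t, (X + C (lam t))).natDegree ≤ n :=
    (natDegree_prod_le _ _).trans (by simp)
  rw [← funext (coeff_reflect_prod_X_add_C lam)]
  exact (hsplits.reflect hdeg).newtonIneqAt (natDegree_reflect_le.trans (max_le le_rfl hdeg)) u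

theorem esym_zero {n : ℕ} (lam : Fin n → ℝ) : esym 0 lam = 1 := by
  simp [esym]

theorem esym_one {n : ℕ} (lam : Fin n → ℝ) : esym 1 lam = ∑ i, lam i := by
  simp [esym, powersetCard_one]

theorem esym_succ_eq_esym1_add {n : ℕ} (k : ℕ) (lam : Fin n → ℝ) (i : Fin n) :
    esym (k + 1) lam = esym1 (k + 1) lam i + lam i * esym1 k lam i := by
  have hi : i ∉ univ.erase i := notMem_erase i univ
  have hdisj : Disjoint ((univ.erase i).powersetCard (k + 1))
      (((univ.erase i).powersetCard k).image (insert i)) := by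
    simp only [disjoint_right, mem_image, mem_powersetCard]
    rintro _ ⟨t, -, rfl⟩ ⟨hsub, -⟩
    exact hi (hsub (mem_insert_self i t))
  have hnot : ∀ s ∈ (univ.erase i).powersetCard k, i ∉ s :=
    fun s hs his => hi ((mem_powersetCard.1 hs).1 his)
  have hinj : Set.InjOn (insert i) ((univ.erase i).powersetCard k : Set (Finset (Fin n))) :=
    fun s hs t ht hst => by rw [← erase_insert (hnot s hs), hst, erase_insert (hnot t ht)]
  rw [esym, ← insert_erase (mem_univ i), powersetCard_succ_insert hi, sum_union hdisj,
    sum_image hinj, esym1, esym1, mul_sum]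
  congr 1
  exact sum_congr rfl fun s hs => prod_insert (hnot s hs)

theorem sum_esym1 {n : ℕ} (r : ℕ) (lam : Fin n → ℝ) :
    ∑ i, esym1 r lam i = (n - r) * esym r lam := by
  have hcomm :
      ∑ i, esym1 r lam i = ∑ s ∈ univ.powersetCard r, ∑ _i ∈ sᶜ, ∏ j ∈ s, lam j := by
    refine sum_comm' fun i s => ?_
    simp only [mem_univ, true_and, mem_powersetCard, mem_compl, subset_erase, subset_univ]
  rw [hcomm, esym, mul_sum]
  refine sum_congr rfl fun s hs => ?_
  have hcard := (mem_powersetCard.1 hs).2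
  rw [sum_const, nsmul_eq_mul, card_compl, Fintype.card_fin, hcard,
    Nat.cast_sub (by simpa [← hcard] using card_le_univ s)]

theorem sum_sq_mul_esym1 {n : ℕ} (k : ℕ) (lam : Fin n → ℝ) :
    ∑ i, lam i ^ 2 * esym1 k lam i =
      esym 1 lam * esym (k + 1) lam - (k + 2) * esym (k + 2) lam := by
  have hterm : ∀ i, lam i ^ 2 * esym1 k lam i
      = lam i * esym (k + 1) lam - (esym (k + 2) lam - esym1 (k + 2) lam i) := fun i => by
    linear_combination esym_succ_eq_esym1_add (k + 1) lam i - lam i * esym_succ_eq_esym1_add k lam i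
  simp_rw [hterm]
  rw [sum_sub_distrib, sum_sub_distrib, ← sum_mul, ← esym_one, sum_const, card_univ,
    Fintype.card_fin, nsmul_eq_mul, sum_esym1]
  push_cast
  ring

theorem mul_esym_succ_le_of_mem_gardingCone {n k : ℕ} (hkn : k ≤ n) {lam : Fin n → ℝ}
    (hG : lam ∈ GardingCone n k) :
    (n : ℝ) * (k + 1) * esym (k + 1) lam ≤ (n - k) * esym 1 lam * esym k lam := by
  induction k with
  | zero => simp [esym_zero]
  | succ k ih =>
    have hprev := ih (by omega) fun j hj hjk => hG j hj (by omega)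
    have hnewton := esym_newtonIneqAt lam k
    unfold NewtonIneqAt at hnewton
    have hσk : 0 < esym k lam := by
      rcases k.eq_zero_or_pos with rfl | hk
      · simp [esym_zero]
      · exact hG k hk (by omega)
    have hσk1 : 0 < esym (k + 1) lam := hG (k + 1) (by omega) le_rfl
    have hnk : (0 : ℝ) < n - k := by rw [sub_pos]; exact_mod_cast (by omega : k < n)
    have hnk1 : (0 : ℝ) ≤ n - k - 1 := by
      rw [sub_sub, sub_nonneg]; exact_mod_cast (by omega : k + 1 ≤ n)
    push_cast
    refine le_of_mul_le_mul_left ?_ (mul_pos hnk hσk)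
    calc (n - k) * esym k lam * (n * (k + 1 + 1) * esym (k + 1 + 1) lam)
        = n * ((k + 2) * (n - k) * (esym k lam * esym (k + 2) lam)) := by ring
      _ ≤ n * ((k + 1) * (n - k - 1) * esym (k + 1) lam ^ 2) := by gcongr
      _ = (n - k - 1) * esym (k + 1) lam * (n * (k + 1) * esym (k + 1) lam) := by ring
      _ ≤ (n - k - 1) * esym (k + 1) lam * ((n - k) * esym 1 lam * esym k lam) := by gcongr
      _ = (n - k) * esym k lam * ((n - (k + 1)) * esym 1 lam * esym (k + 1) lam) := by ring

theorem stmt6 {n : ℕ} (k : ℕ) (hk : 1 ≤ k) (hkn : k ≤ n) (lam : Fin n → ℝ)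
    (hG : lam ∈ GardingCone n k) :
    ∑ i : Fin n, (lam i) ^ 2 * esym1 (k - 1) lam i ≥
      ((k : ℝ) / n) * esym 1 lam * esym k lam := by
  obtain ⟨k, rfl⟩ : ∃ k', k = k' + 1 := ⟨k - 1, by omega⟩
  have hn : (0 : ℝ) < n := by exact_mod_cast (by omega : 0 < n)
  have hchain := mul_esym_succ_le_of_mem_gardingCone hkn hG
  rw [Nat.add_sub_cancel, sum_sq_mul_esym1, ge_iff_le, div_mul_eq_mul_div, div_mul_eq_mul_div,
    div_le_iff₀ hn]
  push_cast at hchain ⊢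
  linear_combination hchain
end

section
/- If λ = (λ_1, ..., λ_n) ∈ Γ_k with λ_1 ≥ ... ≥ λ_n, then σ_k(λ) ≤ C(n,k) · λ_1 λ_2 ··· λ_k, where C(n,k) is the binomial coefficient 'n choose k'. -/
open Finset

/-- Deletion identity for truncated elementary symmetric sums. -/
lemma stmt8_E_erase {n : ℕ} (lam : Fin n → ℝ) (T : Finset (Fin n)) (i : Fin n)
    (hi : i ∈ T) (j : ℕ) :
    ∑ s ∈ T.powersetCard (j + 1), ∏ l ∈ s, lam l
      = (∑ s ∈ (T.erase i).powersetCard (j + 1), ∏ l ∈ s, lam l)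
        + lam i * ∑ s ∈ (T.erase i).powersetCard j, ∏ l ∈ s, lam l := by
  conv_lhs => rw [← insert_erase hi]
  rw [powersetCard_succ_insert (notMem_erase _ _), sum_union, sum_image, mul_sum]
  · congr 1
    refine Finset.sum_congr rfl fun s hs => ?_
    have his : i ∉ s := fun h =>
      (notMem_erase i T) ((mem_powersetCard.mp hs).1 h)
    rw [prod_insert his]
  · intro s hs t ht hst
    have his : i ∉ s := fun h => (notMem_erase i T) ((mem_powersetCard.mp hs).1 h)
    have hit : i ∉ t := fun h => (notMem_erase i T) ((mem_powersetCard.mp ht).1 h)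
    have : (insert i s).erase i = (insert i t).erase i := by rw [hst]
    rwa [erase_insert his, erase_insert hit] at this
  · rw [disjoint_right]
    intro s hs hs'
    obtain ⟨t, ht, rfl⟩ := mem_image.mp hs
    have : i ∈ (T.erase i) := (mem_powersetCard.mp hs').1 (mem_insert_self _ _)
    exact (notMem_erase i T) this

/-- Strict monotone maps between Fin move points up. -/
lemma stmt8_le_of_strictMono {k n : ℕ} (f : Fin k → Fin n) (hf : StrictMono f)
    (m : Fin k) : (m : ℕ) ≤ (f m : ℕ) := by
  induction' hm : (m : ℕ) with p ih generalizing m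
  · exact Nat.zero_le _
  · have hpk : p < k := by omega
    have hlt : (⟨p, hpk⟩ : Fin k) < m := by simp [Fin.lt_def, hm]
    have h1 := ih ⟨p, hpk⟩ rfl
    have h2 : f ⟨p, hpk⟩ < f m := hf hlt
    have := Fin.lt_def.mp h2
    omega

lemma stmt8_erase_step {n k : ℕ} (lam : Fin n → ℝ) (T : Finset (Fin n))
    (hT : ∀ j : ℕ, 1 ≤ j → j ≤ k → 0 < ∑ s ∈ T.powersetCard j, ∏ l ∈ s, lam l)
    (i : Fin n) (hi : i ∈ T) (hneg : lam i ≤ 0) :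
    ∀ j : ℕ, j ≤ k →
      (0 < ∑ s ∈ (T.erase i).powersetCard j, ∏ l ∈ s, lam l) ∧
      (∑ s ∈ T.powersetCard j, ∏ l ∈ s, lam l)
        ≤ ∑ s ∈ (T.erase i).powersetCard j, ∏ l ∈ s, lam l := by
  intro j
  induction j with
  | zero => intro _; simp [powersetCard_zero]
  | succ p ih =>
    intro hjk
    have hp := ih (by omega)
    have hrec := stmt8_E_erase lam T i hi p
    have h1 : ∑ s ∈ T.powersetCard (p + 1), ∏ l ∈ s, lam l
        ≤ ∑ s ∈ (T.erase i).powersetCard (p + 1), ∏ l ∈ s, lam l := by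
      nlinarith [hp.1]
    exact ⟨lt_of_lt_of_le (hT (p + 1) (by omega) hjk) h1, h1⟩

lemma stmt8_purge {n k : ℕ} (lam : Fin n → ℝ) :
    ∀ T : Finset (Fin n),
    (∀ j : ℕ, 1 ≤ j → j ≤ k → 0 < ∑ s ∈ T.powersetCard j, ∏ l ∈ s, lam l) →
    (∀ j : ℕ, 1 ≤ j → j ≤ k →
      0 < ∑ s ∈ (T.filter fun i => 0 < lam i).powersetCard j, ∏ l ∈ s, lam l) ∧
    (∑ s ∈ T.powersetCard k, ∏ l ∈ s, lam l)
      ≤ ∑ s ∈ (T.filter fun i => 0 < lam i).powersetCard k, ∏ l ∈ s, lam l := by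
  intro T
  induction T using Finset.strongInductionOn with
  | _ T IH =>
    intro hT
    by_cases hall : ∀ i ∈ T, 0 < lam i
    · have : T.filter (fun i => 0 < lam i) = T := filter_true_of_mem hall
      rw [this]
      exact ⟨hT, le_refl _⟩
    · push_neg at hall
      obtain ⟨i, hi, hneg⟩ := hall
      have hstep := stmt8_erase_step lam T hT i hi hneg
      have hT' : ∀ j : ℕ, 1 ≤ j → j ≤ k →
          0 < ∑ s ∈ (T.erase i).powersetCard j, ∏ l ∈ s, lam l :=
        fun j _ hjk => (hstep j hjk).1
      have hsub : T.erase i ⊂ T := erase_ssubset hi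
      have hIH := IH (T.erase i) hsub hT'
      have hfe : (T.erase i).filter (fun i => 0 < lam i)
          = T.filter (fun i => 0 < lam i) := by
        rw [filter_erase, erase_eq_of_notMem]
        simp [not_lt.mpr hneg]
      rw [hfe] at hIH
      refine ⟨hIH.1, ?_⟩
      rcases Nat.eq_zero_or_pos k with hk0 | hk0
      · subst hk0; simp [powersetCard_zero]
      · obtain ⟨p, rfl⟩ : ∃ p, k = p + 1 := ⟨k - 1, by omega⟩
        exact le_trans (hstep (p + 1) le_rfl).2 hIH.2

lemma stmt8_filter_eq_map {n k : ℕ} (hkn : k ≤ n) :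
    Finset.univ.filter (fun i : Fin n => (i : ℕ) < k)
      = Finset.univ.map (Fin.castLEEmb hkn) := by
  ext x
  simp only [mem_filter, mem_univ, true_and, mem_map, Fin.castLEEmb_apply]
  constructor
  · intro hx
    exact ⟨⟨x, hx⟩, rfl⟩
  · rintro ⟨m, rfl⟩
    exact m.2

lemma stmt8_monomial {n k : ℕ} (hkn : k ≤ n) (lam : Fin n → ℝ) (hsort : Antitone lam)
    (hpos : ∀ i : Fin n, (i : ℕ) < k → 0 < lam i)
    (s : Finset (Fin n)) (hcard : s.card = k) (hspos : ∀ l ∈ s, 0 < lam l) :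
    ∏ l ∈ s, lam l ≤ ∏ i ∈ Finset.univ.filter (fun i : Fin n => (i : ℕ) < k), lam i := by
  have hmap : Finset.univ.map (s.orderEmbOfFin hcard).toEmbedding = s := by
    ext x
    simp only [mem_map, mem_univ, true_and, RelEmbedding.coe_toEmbedding]
    constructor
    · rintro ⟨m, rfl⟩; exact s.orderEmbOfFin_mem hcard m
    · intro hx
      have := (Set.ext_iff.mp (s.range_orderEmbOfFin hcard) x).mpr hx
      obtain ⟨m, hm⟩ := this
      exact ⟨m, hm⟩
  rw [← hmap, prod_map, stmt8_filter_eq_map hkn, prod_map]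
  apply Finset.prod_le_prod
  · intro m _
    exact le_of_lt (hspos _ (s.orderEmbOfFin_mem hcard m))
  · intro m _
    apply hsort
    rw [Fin.le_def]
    exact stmt8_le_of_strictMono _ (s.orderEmbOfFin hcard).strictMono m

theorem stmt8 {n : ℕ} (k : ℕ) (hk : 1 ≤ k) (hkn : k ≤ n) (lam : Fin n → ℝ)
    (hG : lam ∈ GardingCone n k) (hsort : Antitone lam) :
    esym k lam ≤ (n.choose k : ℝ) *
      ∏ i ∈ Finset.univ.filter (fun i : Fin n => (i : ℕ) < k), lam i := by
  have hU : ∀ j : ℕ, 1 ≤ j → j ≤ k →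
      0 < ∑ s ∈ (Finset.univ : Finset (Fin n)).powersetCard j, ∏ l ∈ s, lam l :=
    fun j h1 h2 => hG j h1 h2
  obtain ⟨hTpos, hle⟩ := stmt8_purge lam Finset.univ hU
  set T : Finset (Fin n) := Finset.univ.filter fun i => 0 < lam i with hTdef
  -- T has at least k elements
  have hcardT : k ≤ T.card := by
    by_contra hc
    push_neg at hc
    have : T.powersetCard k = ∅ := powersetCard_eq_empty.mpr hc
    have h0 := hTpos k hk le_rfl
    rw [this] at h0
    simp at h0
  -- positivity of the first k entries
  have hpos : ∀ i : Fin n, (i : ℕ) < k → 0 < lam i := by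
    intro i hik
    by_contra hni
    push_neg at hni
    have hsubset : T ⊆ Finset.Iio i := by
      intro j hj
      rw [hTdef, mem_filter] at hj
      rw [Finset.mem_Iio]
      by_contra hji
      push_neg at hji
      exact absurd (lt_of_lt_of_le hj.2 (hsort hji)) (not_lt.mpr hni)
    have := card_le_card hsubset
    rw [Fin.card_Iio] at this
    omega
  set P : ℝ := ∏ i ∈ Finset.univ.filter (fun i : Fin n => (i : ℕ) < k), lam i with hP
  have hPpos : 0 ≤ P :=
    Finset.prod_nonneg fun i hi => le_of_lt (hpos i (mem_filter.mp hi).2)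
  have hbound : ∑ s ∈ T.powersetCard k, ∏ l ∈ s, lam l ≤ (T.card.choose k : ℝ) * P := by
    calc ∑ s ∈ T.powersetCard k, ∏ l ∈ s, lam l
        ≤ (T.powersetCard k).card • P := by
          apply Finset.sum_le_card_nsmul
          intro s hs
          obtain ⟨hsub, hc⟩ := mem_powersetCard.mp hs
          exact stmt8_monomial hkn lam hsort hpos s hc
            fun l hl => (mem_filter.mp (hsub hl)).2
      _ = (T.card.choose k : ℝ) * P := by
          rw [card_powersetCard, nsmul_eq_mul]
  have hchoose : (T.card.choose k : ℝ) ≤ (n.choose k : ℝ) := by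
    have : T.card ≤ n := by
      simpa using card_le_card (subset_univ T)
    exact_mod_cast Nat.choose_le_choose k this
  calc esym k lam = ∑ s ∈ (Finset.univ : Finset (Fin n)).powersetCard k, ∏ l ∈ s, lam l := rfl
    _ ≤ ∑ s ∈ T.powersetCard k, ∏ l ∈ s, lam l := hle
    _ ≤ (T.card.choose k : ℝ) * P := hbound
    _ ≤ (n.choose k : ℝ) * P := mul_le_mul_of_nonneg_right hchoose hPpos
end

section
/- If f is a symmetric function of λ_1, ..., λ_n that is concave and λ_1 ≥ λ_2 ≥ ... ≥ λ_n, then ∂f/∂λ_1 (λ) ≤ ∂f/∂λ_2 (λ) ≤ ... ≤ ∂f/∂λ_n (λ). -/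
open Finset

open Filter Topology

-- symmetry lemma and concave lemma
lemma lemA {n : ℕ} (f : (Fin n → ℝ) → ℝ) (hconc : ConcaveOn ℝ Set.univ f)
    (x y : Fin n → ℝ) (hd : DifferentiableAt ℝ f x) (heq : f y = f x) :
    0 ≤ fderiv ℝ f x (y - x) := by
  set v := y - x with hv
  have hcurve : HasDerivAt (fun t : ℝ => x + t • v) v 0 :=
    by simpa using ((hasDerivAt_id (0:ℝ)).smul_const v).const_add x
  have hd' : HasFDerivAt f (fderiv ℝ f x) (x + (0:ℝ) • v) := by simpa using hd.hasFDerivAt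
  have hg : HasDerivAt (fun t : ℝ => f (x + t • v)) (fderiv ℝ f x v) 0 := by
    exact hd'.comp_hasDerivAt 0 hcurve
  have hslope := hasDerivAt_iff_tendsto_slope.mp hg
  have hsub : 𝓝[>] (0:ℝ) ≤ 𝓝[≠] (0:ℝ) :=
    nhdsWithin_mono _ (fun t ht => ne_of_gt ht)
  refine ge_of_tendsto (hslope.mono_left hsub) ?_
  filter_upwards [Ioc_mem_nhdsGT (by norm_num : (0:ℝ) < 1)] with t ht
  have hge : f x ≤ f (x + t • v) := by
    have := hconc.2 (Set.mem_univ x) (Set.mem_univ y) (by linarith [ht.2] : (0:ℝ) ≤ 1 - t)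
      (le_of_lt ht.1) (by ring)
    have hx : (1 - t) • x + t • y = x + t • v := by
      rw [hv]; module
    rw [hx, heq] at this
    calc f x = (1-t) * f x + t * f x := by ring
    _ ≤ f (x + t • v) := by simpa [smul_eq_mul] using this
  have : slope (fun t : ℝ => f (x + t • v)) 0 t = (f (x + t • v) - f x) / t := by
    simp [slope, div_eq_inv_mul]
  rw [this]
  exact div_nonneg (by linarith) ht.1.le

lemma lemB {n : ℕ} (f : (Fin n → ℝ) → ℝ) (hsmooth : ContDiff ℝ (⊤ : ℕ∞) f)
    (hsym : ∀ (σ : Equiv.Perm (Fin n)) (x : Fin n → ℝ), f (x ∘ σ) = f x)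
    (σ : Equiv.Perm (Fin n)) (x v : Fin n → ℝ) :
    fderiv ℝ f (x ∘ σ) (v ∘ σ) = fderiv ℝ f x v := by
  let L : (Fin n → ℝ) →L[ℝ] (Fin n → ℝ) :=
    (LinearMap.funLeft ℝ ℝ σ).toContinuousLinearMap
  have hL : ∀ y : Fin n → ℝ, L y = y ∘ σ := fun y => rfl
  have hcomp : (fun y => f (L y)) = f := by
    funext y; rw [hL]; exact hsym σ y
  have hdiff := hsmooth.differentiable (by simp)
  have h1 : HasFDerivAt (fun y => f (L y)) ((fderiv ℝ f (L x)).comp L) x :=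
    (hdiff (L x)).hasFDerivAt.comp x L.hasFDerivAt
  rw [hcomp] at h1
  have := h1.fderiv
  calc fderiv ℝ f (x ∘ σ) (v ∘ σ) = ((fderiv ℝ f (L x)).comp L) v := rfl
  _ = fderiv ℝ f x v := by rw [← this]

theorem stmt12_aux {n : ℕ} (f : (Fin n → ℝ) → ℝ) (hsmooth : ContDiff ℝ (⊤ : ℕ∞) f)
    (hsym : ∀ (σ : Equiv.Perm (Fin n)) (x : Fin n → ℝ), f (x ∘ σ) = f x)
    (hconc : ConcaveOn ℝ Set.univ f) (lam : Fin n → ℝ) (hsort : Antitone lam) :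
    ∀ i j : Fin n, i ≤ j →
      fderiv ℝ f lam (Pi.single i 1) ≤ fderiv ℝ f lam (Pi.single j 1) := by
  intro i j hij
  rcases eq_or_lt_of_le hij with rfl | hlt
  · exact le_refl _
  have hij' : i ≠ j := ne_of_lt hlt
  have hlam : lam j ≤ lam i := hsort hij
  set σ : Equiv.Perm (Fin n) := Equiv.swap i j
  rcases eq_or_lt_of_le hlam with heq | hstrict
  · -- equal case: derivative symmetric
    have hfix : lam ∘ σ = lam := by
      funext m
      simp only [Function.comp_apply, σ, Equiv.swap_apply_def]
      split_ifs with h1 h2 <;> simp_all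
    have hsingle : (Pi.single i 1 : Fin n → ℝ) ∘ σ = Pi.single j 1 := by
      funext m
      simp only [Function.comp_apply, σ, Equiv.swap_apply_def, Pi.single_apply]
      split_ifs <;> simp_all
    have := lemB f hsmooth hsym σ lam (Pi.single i 1)
    rw [hfix, hsingle] at this
    exact this.ge
  · have heqf : f (lam ∘ σ) = f lam := hsym σ lam
    have hA := lemA f hconc lam (lam ∘ σ)
      (hsmooth.differentiable (by simp) lam) heqf
    have hdiff : lam ∘ σ - lam =
        (lam j - lam i) • ((Pi.single i 1 : Fin n → ℝ) - Pi.single j 1) := by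
      funext m
      simp only [Pi.sub_apply, Pi.smul_apply, Function.comp_apply, σ,
        Equiv.swap_apply_def, Pi.single_apply, smul_eq_mul]
      split_ifs <;> simp_all
    rw [hdiff, map_smul, map_sub] at hA
    have : 0 ≤ (lam j - lam i) *
        (fderiv ℝ f lam (Pi.single i 1) - fderiv ℝ f lam (Pi.single j 1)) := by
      simpa [smul_eq_mul] using hA
    nlinarith


theorem stmt12 {n : ℕ} (f : (Fin n → ℝ) → ℝ) (hsmooth : ContDiff ℝ (⊤ : ℕ∞) f)
    (hsym : ∀ (σ : Equiv.Perm (Fin n)) (x : Fin n → ℝ), f (x ∘ σ) = f x)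
    (hconc : ConcaveOn ℝ Set.univ f) (lam : Fin n → ℝ) (hsort : Antitone lam) :
    ∀ i j : Fin n, i ≤ j →
      fderiv ℝ f lam (Pi.single i 1) ≤ fderiv ℝ f lam (Pi.single j 1) :=
  stmt12_aux f hsmooth hsym hconc lam hsort
end

section
/- Let D = diag(d_1, ..., d_N) be a real diagonal N×N matrix and y ∈ ℝ^N a row vector with all d_i ≠ 0. Then det(yᵀy + D) = det(D) · (1 + Σ_i y_i²/d_i). Consequently, if d_1, ..., d_{N-1} > 0, d_N < 0, and 1 + Σ_i y_i²/d_i < 0, then the symmetric matrix yᵀy + D is positive definite. -/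
/-!
Factoring out `diagonal d` reduces the determinant to the matrix determinant lemma for
`1 + u vᵀ`. For definiteness, the quadratic form is `Q x = (y ⬝ᵥ x)² + ∑ dᵢ xᵢ²`. Let `l` be
the negative index and `a = ∑_{i ≠ l} yᵢ² / dᵢ ≥ 0`. Cauchy–Schwarz with weights `dᵢ > 0`
over `i ≠ l` gives `(1 + a) (Q x - d_l x_l²) ≥ (y_l x_l)²`, hence
`(1 + a) Q x ≥ x_l² (y_l² + (1 + a) d_l)`, and the last factor is positive because
`1 + a + y_l² / d_l < 0` and `d_l < 0`. When `x_l = 0`, already `Q x ≥ ∑_{i ≠ l} dᵢ xᵢ² > 0`.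
-/

open Finset

open Matrix

theorem Matrix.det_vecMulVec_add_diagonal {ι K : Type*} [Fintype ι] [DecidableEq ι] [Field K]
    (u v d : ι → K) (hd : ∀ i, d i ≠ 0) :
    (vecMulVec u v + diagonal d).det = (∏ i, d i) * (1 + ∑ i, u i * v i / d i) := by
  have hfactor : vecMulVec u v + diagonal d =
      diagonal d * (1 + replicateCol Unit (fun i => u i / d i) * replicateRow Unit v) := by
    rw [← vecMulVec_eq, Matrix.mul_add, Matrix.mul_one, add_comm, mul_vecMulVec]
    congr 2
    ext i
    rw [mulVec_diagonal, mul_div_cancel₀ _ (hd i)]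
  rw [hfactor, det_mul, det_one_add_replicateCol_mul_replicateRow, det_diagonal, dotProduct]
  simp only [div_mul_eq_mul_div, mul_comm (v _)]

theorem Matrix.dotProduct_vecMulVec_add_diagonal_mulVec {ι R : Type*} [Fintype ι] [DecidableEq ι]
    [CommRing R] (y d x : ι → R) :
    x ⬝ᵥ ((vecMulVec y y + diagonal d) *ᵥ x) = (y ⬝ᵥ x) ^ 2 + ∑ i, d i * x i ^ 2 := by
  rw [add_mulVec, dotProduct_add, vecMulVec_mulVec]
  simp [dotProduct, mulVec_diagonal, sq, Finset.mul_sum, mul_comm, mul_left_comm]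

theorem Finset.sq_sum_mul_le_sum_sq_div_mul_sum_mul_sq {ι K : Type*} [Field K] [LinearOrder K]
    [IsStrictOrderedRing K] (s : Finset ι) {w : ι → K} (hw : ∀ i ∈ s, 0 < w i) (f g : ι → K) :
    (∑ i ∈ s, f i * g i) ^ 2 ≤ (∑ i ∈ s, f i ^ 2 / w i) * ∑ i ∈ s, w i * g i ^ 2 :=
  sum_sq_le_sum_mul_sum_of_sq_le_mul s (fun i hi => div_nonneg (sq_nonneg _) (hw i hi).le)
    (fun i hi => mul_nonneg (hw i hi).le (sq_nonneg _)) fun i hi => le_of_eq <| by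
      have := (hw i hi).ne'
      field_simp

theorem sq_le_one_add_mul_of_sq_le_mul {K : Type*} [CommRing K] [LinearOrder K]
    [IsStrictOrderedRing K] {a S u : K} (c : K) (ha : 0 ≤ a) (hS : 0 ≤ S) (h : u ^ 2 ≤ a * S) :
    c ^ 2 ≤ (1 + a) * ((u + c) ^ 2 + S) := by
  rcases ha.eq_or_lt with rfl | ha
  · nlinarith [sq_nonneg u]
  · -- `a * (RHS - LHS) = ((1 + a) u + a c)² + (1 + a) (a S - u²)`
    refine le_of_mul_le_mul_left ?_ ha
    nlinarith [sq_nonneg ((1 + a) * u + a * c)]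

theorem Matrix.posDef_vecMulVec_add_diagonal {ι : Type*} [Fintype ι] [DecidableEq ι]
    {y d : ι → ℝ} (l : ι) (hpos : ∀ i ≠ l, 0 < d i) (hneg : d l < 0)
    (hsum : 1 + ∑ i, y i ^ 2 / d i < 0) : (vecMulVec y y + diagonal d).PosDef := by
  have hherm : (vecMulVec y y + diagonal d).IsHermitian := by
    simpa using (posSemidef_vecMulVec_self_star y).isHermitian.add (isHermitian_diagonal d)
  refine .of_dotProduct_mulVec_pos hherm fun x hx => ?_
  rw [star_trivial, dotProduct_vecMulVec_add_diagonal_mulVec, dotProduct]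
  set s := univ.erase l
  have hs : ∀ i ∈ s, 0 < d i := fun i hi => hpos i (ne_of_mem_erase hi)
  set a := ∑ i ∈ s, y i ^ 2 / d i
  set u := ∑ i ∈ s, y i * x i
  set S := ∑ i ∈ s, d i * x i ^ 2
  have ha : 0 ≤ a := sum_nonneg fun i hi => div_nonneg (sq_nonneg _) (hs i hi).le
  have hS : 0 ≤ S := sum_nonneg fun i hi => mul_nonneg (hs i hi).le (sq_nonneg _)
  have hcs : u ^ 2 ≤ a * S := sq_sum_mul_le_sum_sq_div_mul_sum_mul_sq s hs y x
  rw [← add_sum_erase _ _ (mem_univ l)] at hsum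
  rw [← add_sum_erase _ _ (mem_univ l), ← add_sum_erase _ _ (mem_univ l)]
  by_cases ht : x l = 0
  · obtain ⟨i, hi⟩ := Function.ne_iff.mp hx
    have hil : i ≠ l := by rintro rfl; exact hi ht
    have hSpos : 0 < S := sum_pos' (fun j hj => mul_nonneg (hs j hj).le (sq_nonneg _))
      ⟨i, mem_erase.mpr ⟨hil, mem_univ i⟩, mul_pos (hpos i hil) (sq_pos_of_ne_zero hi)⟩
    rw [ht]
    nlinarith [sq_nonneg u]
  · have hK : 0 < y l ^ 2 + (1 + a) * d l := by
      have := mul_pos_of_neg_of_neg hsum hneg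
      rwa [add_comm (y l ^ 2 / d l), ← add_assoc, add_mul, div_mul_cancel₀ _ hneg.ne,
        add_comm] at this
    have := sq_le_one_add_mul_of_sq_le_mul (y l * x l) ha hS hcs
    nlinarith [sq_pos_of_ne_zero ht]

theorem stmt14 {N : ℕ} (hN : 1 ≤ N) (d : Fin N → ℝ) (y : Fin N → ℝ)
    (hd : ∀ i, d i ≠ 0) :
    (Matrix.vecMulVec y y + Matrix.diagonal d).det =
        (∏ i, d i) * (1 + ∑ i, y i ^ 2 / d i) ∧
    ((∀ i : Fin N, (i : ℕ) < N - 1 → 0 < d i) → d ⟨N - 1, by omega⟩ < 0 →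
      1 + ∑ i, y i ^ 2 / d i < 0 →
      (Matrix.vecMulVec y y + Matrix.diagonal d).PosDef) := by
  refine ⟨by simpa only [sq] using det_vecMulVec_add_diagonal y y d hd,
    fun hpos hlast hsum => posDef_vecMulVec_add_diagonal _ (fun i hi => hpos i ?_) hlast hsum⟩
  have : (i : ℕ) ≠ N - 1 := fun h => hi (Fin.ext h)
  omega
end

section
/- (Concavity inequality for σ_{n-1} with a very negative eigenvalue.) Let n ≥ 3, F = σ_{n-1}, and λ ∈ Γ_{n-1} with λ_1 = ... = λ_m > λ_{m+1} ≥ ... ≥ λ_n. There exist a constant A > 1 and a small constant δ_0 > 0, depending on n, A and max F, such that if λ_n ≤ -A, then for every ξ ∈ ℝ^n with ξ_i = 0 for 1 < i ≤ m: -Σ_{p≠q} F^{pp,qq} ξ_p ξ_q + (Σ_i F^{ii} ξ_i)² / F + 2 Σ_{i>m} F^{ii} ξ_i² / (λ_1 - λ_i) ≥ (1 + δ_0) · F^{11} ξ_1² / λ_1. -/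
/-
Since `λ ∈ Γ_{n-1}`, all coefficients of `g(x) = ∏ (x + λ_i)` except the constant one are
positive, so `g' > 0` on `[0, ∞)`. Two nonpositive entries would give two roots of `g` in
`[0, ∞)`, or a double one, which is impossible; hence `λ_n < 0` forces `λ_i > 0` for `i < n`.

Put `t_i = 1/λ_i`, `P = σ_n < 0` and `s = Σ t_i = σ_{n-1}/σ_n < 0`. Then `F`, `F^{ii}` and
`F^{pp,qq}` are `P` times polynomials in `t`, and in the variables `x_i = t_i ξ_i` both sides
of the inequality become `P` times a diagonal quadratic form plus the rank-one term
`(Σ t_i x_i)² / s`. Every diagonal coefficient except that of `x_n` has the right sign, and two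
applications of Cauchy–Schwarz reduce the claim to one scalar inequality for that coefficient.
It holds with `δ_0 = 1/8` because `A ≥ 8 max F` forces `-s λ_1 ≤ 1/8`, and because an index
`m < i < n` enters the Cauchy–Schwarz weight with at most `(t_i - t_1)/2`; as `n ≥ 3`, these
weights add up to at most `(Σ_{i<n} t_i - 2 t_1)/2`.
-/

open Finset

section Polynomial

open Polynomial

theorem Finset.sum_powersetCard_card_sub_one_prod {ι R : Type*} [DecidableEq ι] [CommRing R]
    {T : Finset ι} (hT : T.Nonempty) (f : ι → R) :
    ∑ u ∈ T.powersetCard (#T - 1), ∏ i ∈ u, f i = ∑ a ∈ T, ∏ i ∈ T.erase a, f i := by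
  have h := coeff_derivative (∏ i ∈ T, (X + C (f i))) 0
  simp only [Nat.cast_zero, zero_add, mul_one] at h
  rw [← T.prod_X_add_C_coeff f (Nat.one_le_iff_ne_zero.mpr hT.card_ne_zero), ← h,
    coeff_zero_eq_eval_zero, derivative_prod_finset]
  simp [eval_finsetSum, eval_prod]

theorem Finset.sum_powersetCard_card_sub_one_prod_eq_prod_mul_sum_inv {ι K : Type*}
    [DecidableEq ι] [Field K] {T : Finset ι} (hT : T.Nonempty) {f : ι → K}
    (hf : ∀ i ∈ T, f i ≠ 0) :
    ∑ u ∈ T.powersetCard (#T - 1), ∏ i ∈ u, f i = (∏ i ∈ T, f i) * ∑ a ∈ T, (f a)⁻¹ := by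
  rw [sum_powersetCard_card_sub_one_prod hT, mul_sum]
  refine sum_congr rfl fun a ha => ?_
  rw [eq_mul_inv_iff_mul_eq₀ (hf a ha), prod_erase_mul _ _ ha]

theorem coeff_prod_X_add_C_eq_esym {n k : ℕ} (lam : Fin n → ℝ) (hk : k ≤ n) :
    (∏ i, (X + C (lam i))).coeff k = esym (n - k) lam := by
  rw [Finset.prod_X_add_C_coeff _ _ (by simpa using hk)]
  simp [esym]

theorem GardingCone.esym_pos {n k j : ℕ} {lam : Fin n → ℝ} (hlam : lam ∈ GardingCone n k)
    (hj : j ≤ k) : 0 < esym j lam := by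
  rcases Nat.eq_zero_or_pos j with rfl | hj₀
  · simp [esym]
  · exact hlam j hj₀ hj

theorem eval_derivative_prod_X_add_C_pos {n : ℕ} {lam : Fin n → ℝ}
    (hlam : lam ∈ GardingCone n (n - 1)) (hn : 1 ≤ n) {x : ℝ} (hx : 0 ≤ x) :
    0 < (derivative (∏ i, (X + C (lam i)))).eval x := by
  have hdeg : (derivative (∏ i, (X + C (lam i)))).natDegree < n := by
    refine (natDegree_derivative_le _).trans_lt ?_
    have := natDegree_prod_le (s := univ) (f := fun i => X + C (lam i))
    simp only [natDegree_X_add_C, sum_const, card_univ, Fintype.card_fin, smul_eq_mul,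
      mul_one] at this
    exact (Nat.sub_le_sub_right this 1).trans_lt (by omega)
  have hcoeff : ∀ k < n, (derivative (∏ i, (X + C (lam i)))).coeff k
      = esym (n - (k + 1)) lam * (k + 1) := fun k hk => by
    rw [coeff_derivative, coeff_prod_X_add_C_eq_esym lam hk]
  rw [eval_eq_sum_range' hdeg]
  refine sum_pos' (fun k hk => ?_) ⟨0, mem_range.mpr hn, ?_⟩
  · rw [hcoeff k (mem_range.mp hk)]
    have := GardingCone.esym_pos hlam (j := n - (k + 1)) (by omega)
    positivity
  · rw [hcoeff 0 hn]
    simpa using GardingCone.esym_pos hlam (j := n - 1) le_rfl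

theorem eval_derivative_prod_X_add_C_eq_zero_of_eq {n : ℕ} {lam : Fin n → ℝ} {p q : Fin n}
    (hpq : p ≠ q) (hlam : lam p = lam q) :
    (derivative (∏ i, (X + C (lam i)))).eval (-lam p) = 0 := by
  rw [derivative_prod_finset, eval_finsetSum]
  refine sum_eq_zero fun a _ => ?_
  rw [eval_mul, eval_prod]
  refine mul_eq_zero_of_left (prod_eq_zero (i := if a = p then q else p) ?_ ?_) _
  · split_ifs with h
    · simp [h, Ne.symm hpq]
    · simp [Ne.symm h]
  · split_ifs <;> simp [hlam]

theorem GardingCone.pos_of_nonpos {n : ℕ} {lam : Fin n → ℝ}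
    (hlam : lam ∈ GardingCone n (n - 1)) {p q : Fin n} (hpq : p ≠ q) (hq : lam q ≤ 0) :
    0 < lam p := by
  have hn : 1 ≤ n := p.pos
  set G := ∏ i, (X + C (lam i))
  have hmono : StrictMonoOn (fun x => G.eval x) (Set.Ici 0) := by
    refine strictMonoOn_of_deriv_pos (convex_Ici 0) G.continuousOn fun x hx => ?_
    rw [interior_Ici] at hx
    rw [Polynomial.deriv]
    exact eval_derivative_prod_X_add_C_pos hlam hn hx.le
  have hroot : ∀ i, G.eval (-lam i) = 0 := fun i => by
    simp [G, eval_prod, prod_eq_zero (mem_univ i)]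
  by_contra! hp
  have hpq' : lam p = lam q := neg_injective <|
    hmono.injOn (neg_nonneg.mpr hp) (neg_nonneg.mpr hq) ((hroot p).trans (hroot q).symm)
  have := eval_derivative_prod_X_add_C_pos hlam hn (neg_nonneg.mpr hp)
  rw [eval_derivative_prod_X_add_C_eq_zero_of_eq hpq hpq'] at this
  exact this.false

end Polynomial

theorem sum_sum_ite_ne {ι M : Type*} [Fintype ι] [DecidableEq ι] [AddCommGroup M]
    (a : ι → ι → M) :
    ∑ p, ∑ q, (if p ≠ q then a p q else 0) = ∑ p, ∑ q, a p q - ∑ p, a p p := by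
  rw [← sum_sub_distrib]
  refine sum_congr rfl fun p _ => ?_
  have hdiag : a p p = ∑ q, if p = q then a p q else 0 := by simp
  rw [eq_sub_iff_add_eq, hdiag, ← sum_add_distrib]
  exact sum_congr rfl fun q _ => by by_cases h : p = q <;> simp [h]

theorem sum_sum_ite_ne_sub_sub_mul_mul {ι R : Type*} [Fintype ι] [DecidableEq ι] [CommRing R]
    (s : R) (t x : ι → R) :
    ∑ p, ∑ q, (if p ≠ q then (s - t p - t q) * x p * x q else 0)
      = s * (∑ i, x i) ^ 2 - 2 * (∑ i, t i * x i) * ∑ i, x i - ∑ i, (s - 2 * t i) * x i ^ 2 := by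
  rw [sum_sum_ite_ne]
  congr 1
  · calc ∑ p, ∑ q, (s - t p - t q) * x p * x q
        = ∑ p, ∑ q, (s * (x p * x q) - t p * x p * x q - x p * (t q * x q)) :=
          sum_congr rfl fun p _ => sum_congr rfl fun q _ => by ring
      _ = s * ∑ p, ∑ q, x p * x q - ∑ p, ∑ q, t p * x p * x q
            - ∑ p, ∑ q, x p * (t q * x q) := by
          simp only [sum_sub_distrib, mul_sum]
      _ = _ := by rw [← sum_mul_sum, ← sum_mul_sum, ← sum_mul_sum]; ring
  · exact sum_congr rfl fun p _ => by ring

noncomputable def reducedForm {ι : Type*} [Fintype ι] (t x : ι → ℝ) (i₀ : ι) (S : Finset ι) : ℝ :=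
  ∑ i, (∑ j, t j - 2 * t i) * x i ^ 2 + (∑ i, t i * x i) ^ 2 / ∑ j, t j
    + 2 * ∑ i ∈ S, t i₀ * (∑ j, t j - t i) * x i ^ 2 / (t i - t i₀)

section Reciprocal

variable {n : ℕ} {lam : Fin n → ℝ}

theorem esym_sub_one_eq (hlam : ∀ i, lam i ≠ 0) (hn : 1 ≤ n) :
    esym (n - 1) lam = (∏ i, lam i) * ∑ i, (lam i)⁻¹ := by
  have hT : (univ : Finset (Fin n)).Nonempty := univ_nonempty_iff.mpr ⟨⟨0, hn⟩⟩
  rw [esym, ← sum_powersetCard_card_sub_one_prod_eq_prod_mul_sum_inv hT fun i _ => hlam i]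
  simp

theorem esym1_sub_two_eq (hlam : ∀ i, lam i ≠ 0) (hn : 2 ≤ n) (i : Fin n) :
    esym1 (n - 2) lam i = (∏ j, lam j) * (lam i)⁻¹ * (∑ j, (lam j)⁻¹ - (lam i)⁻¹) := by
  have hcard : #(univ.erase i) = n - 1 := by simp
  have hT : (univ.erase i).Nonempty := by rw [← card_pos, hcard]; omega
  rw [esym1, show n - 2 = #(univ.erase i) - 1 by omega,
    sum_powersetCard_card_sub_one_prod_eq_prod_mul_sum_inv hT fun j _ => hlam j,
    sum_erase_eq_sub (mem_univ i),
    eq_mul_inv_iff_mul_eq₀ (hlam i) |>.mpr (prod_erase_mul _ _ (mem_univ i))]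

theorem esym2_sub_three_eq (hlam : ∀ i, lam i ≠ 0) (hn : 3 ≤ n) {p q : Fin n} (hpq : p ≠ q) :
    esym2 (n - 3) lam p q
      = (∏ j, lam j) * (lam p)⁻¹ * (lam q)⁻¹ * (∑ j, (lam j)⁻¹ - (lam p)⁻¹ - (lam q)⁻¹) := by
  have hq : q ∈ univ.erase p := mem_erase.mpr ⟨hpq.symm, mem_univ q⟩
  have hcard : #((univ.erase p).erase q) = n - 2 := by
    rw [card_erase_of_mem hq]; simp; omega
  have hT : ((univ.erase p).erase q).Nonempty := by rw [← card_pos, hcard]; omega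
  rw [esym2, show n - 3 = #((univ.erase p).erase q) - 1 by omega,
    sum_powersetCard_card_sub_one_prod_eq_prod_mul_sum_inv hT fun j _ => hlam j,
    sum_erase_eq_sub hq, sum_erase_eq_sub (mem_univ p),
    eq_mul_inv_iff_mul_eq₀ (hlam q) |>.mpr (prod_erase_mul _ _ hq),
    eq_mul_inv_iff_mul_eq₀ (hlam p) |>.mpr (prod_erase_mul _ _ (mem_univ p))]

theorem sum_sum_ite_ne_esym2_eq (hn : 3 ≤ n) (hlam : ∀ i, lam i ≠ 0) (ξ : Fin n → ℝ) :
    ∑ p : Fin n, ∑ q : Fin n, (if p ≠ q then esym2 (n - 3) lam p q * ξ p * ξ q else 0)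
      = (∏ i, lam i) * ((∑ i, (lam i)⁻¹) * (∑ i, (lam i)⁻¹ * ξ i) ^ 2
          - 2 * (∑ i, (lam i)⁻¹ * ((lam i)⁻¹ * ξ i)) * ∑ i, (lam i)⁻¹ * ξ i
          - ∑ i, (∑ j, (lam j)⁻¹ - 2 * (lam i)⁻¹) * ((lam i)⁻¹ * ξ i) ^ 2) := by
  rw [← sum_sum_ite_ne_sub_sub_mul_mul, mul_sum]
  refine sum_congr rfl fun p _ => ?_
  rw [mul_sum]
  refine sum_congr rfl fun q _ => ?_
  split_ifs with h
  · rw [esym2_sub_three_eq hlam hn h]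
    ring
  · simp

/-- If `lam i = lam k`, both sides vanish through a division by zero. -/
theorem esym1_mul_sq_div_sub_eq (hn : 2 ≤ n) (hlam : ∀ i, lam i ≠ 0) (ξ : Fin n → ℝ)
    (i k : Fin n) :
    esym1 (n - 2) lam i * ξ i ^ 2 / (lam k - lam i)
      = (∏ j, lam j) * ((lam k)⁻¹ * (∑ j, (lam j)⁻¹ - (lam i)⁻¹)
          * ((lam i)⁻¹ * ξ i) ^ 2 / ((lam i)⁻¹ - (lam k)⁻¹)) := by
  rw [esym1_sub_two_eq hlam hn]
  rcases eq_or_ne (lam k) (lam i) with h | h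
  · simp [h]
  · have : lam k - lam i ≠ 0 := sub_ne_zero.mpr h
    have : (lam i)⁻¹ - (lam k)⁻¹ ≠ 0 := sub_ne_zero.mpr (inv_injective.ne h.symm)
    field_simp [hlam i, hlam k]

theorem esym_form_eq_prod_mul_reducedForm (hn : 3 ≤ n) (hlam : ∀ i, lam i ≠ 0)
    (hs : ∑ i, (lam i)⁻¹ ≠ 0) (ξ : Fin n → ℝ) (i₀ : Fin n) (S : Finset (Fin n)) :
    -(∑ p : Fin n, ∑ q : Fin n, if p ≠ q then esym2 (n - 3) lam p q * ξ p * ξ q else 0)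
        + (∑ i : Fin n, esym1 (n - 2) lam i * ξ i) ^ 2 / esym (n - 1) lam
        + 2 * ∑ i ∈ S, esym1 (n - 2) lam i * ξ i ^ 2 / (lam i₀ - lam i)
      = (∏ i, lam i) * reducedForm lam⁻¹ (lam⁻¹ * ξ) i₀ S := by
  have hP : ∏ i, lam i ≠ 0 := prod_ne_zero_iff.mpr fun i _ => hlam i
  have hF : ∑ i, esym1 (n - 2) lam i * ξ i = (∏ i, lam i) * ((∑ i, (lam i)⁻¹)
      * ∑ i, (lam i)⁻¹ * ξ i - ∑ i, (lam i)⁻¹ * ((lam i)⁻¹ * ξ i)) := by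
    simp only [mul_sum, ← sum_sub_distrib]
    refine sum_congr rfl fun i _ => ?_
    rw [esym1_sub_two_eq hlam (by omega)]
    ring
  rw [reducedForm, hF, sum_sum_ite_ne_esym2_eq hn hlam,
    sum_congr rfl fun i _ => esym1_mul_sq_div_sub_eq (by omega) hlam ξ i i₀, ← mul_sum,
    esym_sub_one_eq hlam (by omega)]
  simp only [Pi.inv_apply, Pi.mul_apply]
  generalize ∑ i, (lam i)⁻¹ = s at hs ⊢
  generalize ∏ i, lam i = P at hP ⊢
  generalize ∑ i, (lam i)⁻¹ * ξ i = X
  generalize ∑ i, (lam i)⁻¹ * ((lam i)⁻¹ * ξ i) = T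
  generalize ∑ i, (s - 2 * (lam i)⁻¹) * ((lam i)⁻¹ * ξ i) ^ 2 = D
  field_simp
  ring

theorem mul_esym1_mul_sq_div_eq (hn : 2 ≤ n) (hlam : ∀ i, lam i ≠ 0) (c : ℝ)
    (ξ : Fin n → ℝ) (i : Fin n) :
    c * esym1 (n - 2) lam i * ξ i ^ 2 / lam i
      = (∏ j, lam j) * (c * (∑ j, lam⁻¹ j - lam⁻¹ i) * (lam⁻¹ * ξ) i ^ 2) := by
  rw [esym1_sub_two_eq hlam hn]
  simp only [Pi.inv_apply, Pi.mul_apply]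
  field_simp [hlam i]

end Reciprocal

section OneNegative

variable {n : ℕ} {lam : Fin n → ℝ} {L : Fin n}

theorem ne_zero_of_one_neg (hpos : ∀ i, i ≠ L → 0 < lam i) (hL : lam L < 0) (i : Fin n) :
    lam i ≠ 0 := by
  rcases eq_or_ne i L with rfl | hi
  exacts [hL.ne, (hpos i hi).ne']

theorem prod_neg_of_one_neg (hpos : ∀ i, i ≠ L → 0 < lam i) (hL : lam L < 0) :
    ∏ i, lam i < 0 := by
  rw [← prod_erase_mul _ _ (mem_univ L)]
  exact mul_neg_of_pos_of_neg (prod_pos fun i hi => hpos i (ne_of_mem_erase hi)) hL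

theorem inv_sum_neg (hpos : ∀ i, i ≠ L → 0 < lam i) (hL : lam L < 0)
    (hF : 0 < esym (n - 1) lam) : ∑ i, (lam i)⁻¹ < 0 := by
  rw [esym_sub_one_eq (ne_zero_of_one_neg hpos hL) L.pos] at hF
  exact neg_of_mul_pos_right hF (prod_neg_of_one_neg hpos hL).le

theorem neg_lt_of_inv_sum_neg (hpos : ∀ i, i ≠ L → 0 < lam i) (hL : lam L < 0)
    (hs : ∑ i, (lam i)⁻¹ < 0) {i : Fin n} (hi : i ≠ L) : -lam L < lam i := by
  have h : (lam i)⁻¹ ≤ ∑ j ∈ univ.erase L, (lam j)⁻¹ :=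
    single_le_sum (fun j hj => (inv_pos.mpr (hpos j (ne_of_mem_erase hj))).le)
      (mem_erase.mpr ⟨hi, mem_univ i⟩)
  rw [sum_erase_eq_sub (mem_univ L)] at h
  rw [← inv_lt_inv₀ (hpos i hi) (neg_pos.mpr hL), inv_neg]
  linarith

theorem mul_neg_mul_neg_inv_sum_le (hpos : ∀ i, i ≠ L → 0 < lam i) (hL : lam L < 0)
    (hge : ∀ i, i ≠ L → 1 ≤ lam i) {i₀ : Fin n} (hi₀ : i₀ ≠ L) (hs : ∑ i, (lam i)⁻¹ < 0) :
    lam i₀ * -lam L * -∑ i, (lam i)⁻¹ ≤ esym (n - 1) lam := by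
  have hi₀' : i₀ ∈ univ.erase L := mem_erase.mpr ⟨hi₀, mem_univ _⟩
  have hM : 1 ≤ ∏ i ∈ (univ.erase L).erase i₀, lam i :=
    one_le_prod fun i hi => hge i (ne_of_mem_erase (mem_of_mem_erase hi))
  rw [esym_sub_one_eq (ne_zero_of_one_neg hpos hL) L.pos,
    ← prod_erase_mul _ _ (mem_univ L), ← mul_prod_erase _ _ hi₀']
  have := mul_pos (neg_pos.mpr hL) (neg_pos.mpr hs)
  nlinarith [mul_le_mul_of_nonneg_right hM (mul_pos (hpos i₀ hi₀) this).le]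

theorem neg_inv_sum_le (hpos : ∀ i, i ≠ L → 0 < lam i) (hL : 1 ≤ -lam L)
    (hs : ∑ i, (lam i)⁻¹ < 0) {i₀ : Fin n} (hi₀ : i₀ ≠ L) (hF : esym (n - 1) lam ≤ -lam L / 8) :
    -∑ i, (lam i)⁻¹ ≤ (lam i₀)⁻¹ / 8 := by
  have hL' : lam L < 0 := by linarith
  have hge : ∀ i, i ≠ L → 1 ≤ lam i := fun i hi => by
    linarith [neg_lt_of_inv_sum_neg hpos hL' hs hi]
  have hl := hpos i₀ hi₀
  have h : lam i₀ * -∑ i, (lam i)⁻¹ ≤ 1 / 8 := by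
    refine le_of_mul_le_mul_right ?_ (neg_pos.mpr hL')
    linarith [mul_neg_mul_neg_inv_sum_le hpos hL' hge hi₀ hs]
  calc -∑ i, (lam i)⁻¹ = (lam i₀)⁻¹ * (lam i₀ * -∑ i, (lam i)⁻¹) := by
        rw [inv_mul_cancel_left₀ hl.ne']
    _ ≤ (lam i₀)⁻¹ * (1 / 8) := mul_le_mul_of_nonneg_left h (inv_nonneg.mpr hl.le)
    _ = (lam i₀)⁻¹ / 8 := by ring

end OneNegative

theorem sq_le_mul_add_sq_div {W D p y z : ℝ} (hW : 0 ≤ W) (hD : 0 ≤ D) (hp : 0 < p)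
    (hy : y ^ 2 ≤ W * D) : z ^ 2 ≤ (W + p) * (D + (z + y) ^ 2 / p) := by
  have hX : 0 ≤ W * (z + y) ^ 2 + 2 * p * (z + y) * y + p ^ 2 * D := by
    rcases hW.eq_or_lt with rfl | hWpos
    · have hy₀ : y = 0 := pow_eq_zero_iff two_ne_zero |>.mp (by nlinarith [sq_nonneg y])
      subst hy₀
      simpa using mul_nonneg (sq_nonneg p) hD
    · refine nonneg_of_mul_nonneg_right ?_ hWpos
      have : W * (W * (z + y) ^ 2 + 2 * p * (z + y) * y + p ^ 2 * D)
          = (W * (z + y) + p * y) ^ 2 + p ^ 2 * (W * D - y ^ 2) := by ring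
      rw [this]
      nlinarith [sq_nonneg (W * (z + y) + p * y)]
  rw [← sub_nonneg]
  have : (W + p) * (D + (z + y) ^ 2 / p) - z ^ 2
      = (p * (W * D - y ^ 2) + (W * (z + y) ^ 2 + 2 * p * (z + y) * y + p ^ 2 * D)) / p := by
    field_simp
    ring
  rw [this]
  exact div_nonneg (add_nonneg (mul_nonneg hp.le (sub_nonneg.mpr hy)) hX) hp.le

theorem sum_mul_sq_add_sq_sum_div_nonneg {ι : Type*} [DecidableEq ι] {K : Finset ι} {L : ι}
    (hL : L ∈ K) {e t x : ι → ℝ} {p : ℝ} (hp : 0 < p) (he : ∀ i ∈ K.erase L, 0 < e i)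
    (hcrit : -e L * (∑ i ∈ K.erase L, t i ^ 2 / e i + p) ≤ t L ^ 2) :
    0 ≤ ∑ i ∈ K, e i * x i ^ 2 + (∑ i ∈ K, t i * x i) ^ 2 / p := by
  set W := ∑ i ∈ K.erase L, t i ^ 2 / e i
  set D := ∑ i ∈ K.erase L, e i * x i ^ 2
  set y := ∑ i ∈ K.erase L, t i * x i
  have hW : 0 ≤ W := sum_nonneg fun i hi => div_nonneg (sq_nonneg _) (he i hi).le
  have hD : 0 ≤ D := sum_nonneg fun i hi => mul_nonneg (he i hi).le (sq_nonneg _)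
  have hCS : y ^ 2 ≤ W * D := sum_sq_le_sum_mul_sum_of_sq_le_mul _
    (fun i hi => div_nonneg (sq_nonneg _) (he i hi).le)
    (fun i hi => mul_nonneg (he i hi).le (sq_nonneg _))
    (fun i hi => le_of_eq (by field_simp [(he i hi).ne']))
  rw [← add_sum_erase K _ hL, ← add_sum_erase K _ hL]
  have h₁ := sq_le_mul_add_sq_div (z := t L * x L) hW hD hp hCS
  have h₂ : -e L * x L ^ 2 * (W + p) ≤ (t L * x L) ^ 2 := by
    nlinarith [mul_le_mul_of_nonneg_right hcrit (sq_nonneg (x L))]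
  have hWp : 0 < W + p := by linarith
  nlinarith

theorem sum_univ_eq_add_sum_of_eq_zero {ι : Type*} [Fintype ι] [DecidableEq ι] {f : ι → ℝ}
    {i₀ : ι} {S : Finset ι} (hi₀S : i₀ ∉ S) (hf : ∀ i, i ≠ i₀ → i ∉ S → f i = 0) :
    ∑ i, f i = f i₀ + ∑ i ∈ S, f i := by
  rw [← sum_insert hi₀S]
  exact (sum_subset (subset_univ _) fun i _ hi => hf i (by aesop) (by aesop)).symm

theorem sum_erase_sub_le {ι : Type*} [Fintype ι] [DecidableEq ι] {t : ι → ℝ} {i₀ L j : ι}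
    {S : Finset ι} (hi₀S : i₀ ∉ S) (hL₀ : L ≠ i₀) (hj₀ : j ≠ i₀) (hjL : j ≠ L)
    (ht₀ : 0 ≤ t i₀) (hmin : ∀ i, i ≠ L → t i₀ ≤ t i) :
    ∑ i ∈ S.erase L, (t i - t i₀) ≤ ∑ i, t i - t L - 2 * t i₀ := by
  set R := (univ.erase L).erase i₀
  have hR : 1 ≤ (#R : ℝ) := by
    exact_mod_cast card_pos.mpr ⟨j, by simp [R, hj₀, hjL]⟩
  calc ∑ i ∈ S.erase L, (t i - t i₀)
      ≤ ∑ i ∈ R, (t i - t i₀) := by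
        refine sum_le_sum_of_subset_of_nonneg (fun i hi => ?_) fun i hi _ => ?_
        · have hiS := mem_of_mem_erase hi
          simp [R, ne_of_mem_erase hi, ne_of_mem_of_not_mem hiS hi₀S]
        · exact sub_nonneg.mpr (hmin i (ne_of_mem_erase (mem_of_mem_erase hi)))
    _ = ∑ i ∈ R, t i - #R * t i₀ := by rw [sum_sub_distrib, sum_const, nsmul_eq_mul]
    _ ≤ ∑ i ∈ R, t i - t i₀ := by nlinarith
    _ = ∑ i, t i - t L - 2 * t i₀ := by
      rw [sum_erase_eq_sub (mem_erase.mpr ⟨hL₀.symm, mem_univ _⟩),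
        sum_erase_eq_sub (mem_univ L)]
      ring

theorem top_weight_pos_and_le {t₀ s : ℝ} (ht₀ : 0 < t₀) (hε : -s ≤ t₀ / 8) :
    0 < (1 + 1 / 8) * (s - t₀) - (s - 2 * t₀) ∧
      t₀ ^ 2 / ((1 + 1 / 8) * (s - t₀) - (s - 2 * t₀)) - s / 2 ≤ 3 * t₀ / 2 := by
  have hd : 0 < (1 + 1 / 8) * (s - t₀) - (s - 2 * t₀) := by linarith
  refine ⟨hd, ?_⟩
  rw [sub_le_iff_le_add, div_le_iff₀ hd]
  nlinarith

theorem inner_weight_pos_and_le {t₀ tᵢ s : ℝ} (ht₀ : 0 < t₀) (hti : t₀ < tᵢ) (hs : s < 0) :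
    0 < -(s - 2 * tᵢ + 2 * t₀ * (s - tᵢ) / (tᵢ - t₀)) ∧
      tᵢ ^ 2 / -(s - 2 * tᵢ + 2 * t₀ * (s - tᵢ) / (tᵢ - t₀)) ≤ (tᵢ - t₀) / 2 := by
  have hsub : 0 < tᵢ - t₀ := sub_pos.mpr hti
  have he : -(s - 2 * tᵢ + 2 * t₀ * (s - tᵢ) / (tᵢ - t₀))
      = (2 * tᵢ ^ 2 - s * (tᵢ + t₀)) / (tᵢ - t₀) := by
    field_simp
    ring
  rw [he]
  have hnum : 2 * tᵢ ^ 2 ≤ 2 * tᵢ ^ 2 - s * (tᵢ + t₀) := by nlinarith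
  have hpos : 0 < 2 * tᵢ ^ 2 - s * (tᵢ + t₀) := by nlinarith
  refine ⟨div_pos hpos hsub, ?_⟩
  rw [div_div_eq_mul_div, div_le_div_iff₀ hpos two_pos]
  nlinarith [mul_le_mul_of_nonneg_left hnum hsub.le]

theorem last_coeff_mul_le {t₀ t_L s V : ℝ} (ht₀ : 0 < t₀) (hL : t_L < -t₀) (hs : s < 0)
    (hV₀ : 0 ≤ V) (hV : V ≤ (t₀ - t_L) / 2) :
    (s - 2 * t_L + 2 * t₀ * (s - t_L) / (t_L - t₀)) * V ≤ t_L ^ 2 := by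
  have hsub : 0 < t₀ - t_L := by linarith
  have hc : s - 2 * t_L + 2 * t₀ * (s - t_L) / (t_L - t₀)
      = (2 * t_L ^ 2 + s * (-t_L - t₀)) / (t₀ - t_L) := by
    have : t_L - t₀ ≠ 0 := by linarith
    field_simp
    ring
  rw [hc, div_mul_eq_mul_div, div_le_iff₀ hsub]
  have h₁ : s * (-t_L - t₀) ≤ 0 := mul_nonpos_of_nonpos_of_nonneg hs.le (by linarith)
  nlinarith [mul_le_mul_of_nonneg_left hV (sq_nonneg t_L), mul_nonpos_of_nonpos_of_nonneg h₁ hV₀]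

noncomputable def reducedWeight {ι : Type*} [Fintype ι] [DecidableEq ι] (t : ι → ℝ)
    (i₀ i : ι) : ℝ :=
  if i = i₀ then (1 + 1 / 8) * (∑ j, t j - t i₀) - (∑ j, t j - 2 * t i₀)
  else -(∑ j, t j - 2 * t i + 2 * t i₀ * (∑ j, t j - t i) / (t i - t i₀))

section ReducedForm

variable {ι : Type*} [Fintype ι] [DecidableEq ι] {t x : ι → ℝ} {i₀ : ι} {S : Finset ι}

theorem reducedForm_sub_eq (hi₀S : i₀ ∉ S) (hx : ∀ i, i ≠ i₀ → i ∉ S → x i = 0) :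
    reducedForm t x i₀ S - (1 + 1 / 8) * (∑ i, t i - t i₀) * x i₀ ^ 2
      = -(∑ i ∈ insert i₀ S, reducedWeight t i₀ i * x i ^ 2
          + (∑ i ∈ insert i₀ S, t i * x i) ^ 2 / -∑ i, t i) := by
  have hS : ∑ i ∈ S, reducedWeight t i₀ i * x i ^ 2
      = -(∑ i ∈ S, (∑ j, t j - 2 * t i) * x i ^ 2)
        - 2 * ∑ i ∈ S, t i₀ * (∑ j, t j - t i) * x i ^ 2 / (t i - t i₀) := by
    rw [mul_sum, ← sum_neg_distrib, ← sum_sub_distrib]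
    refine sum_congr rfl fun i hi => ?_
    rw [reducedWeight, if_neg (ne_of_mem_of_not_mem hi hi₀S)]
    ring
  rw [reducedForm, sum_univ_eq_add_sum_of_eq_zero hi₀S fun i h₀ hS => by simp [hx i h₀ hS],
    sum_univ_eq_add_sum_of_eq_zero (f := fun i => t i * x i) hi₀S
      fun i h₀ hS => by simp [hx i h₀ hS],
    sum_insert hi₀S, sum_insert hi₀S, hS, reducedWeight, if_pos rfl, div_neg]
  ring

theorem reducedForm_le {L j : ι} (hi₀S : i₀ ∉ S) (hLS : L ∈ S) (hj₀ : j ≠ i₀) (hjL : j ≠ L)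
    (hx : ∀ i, i ≠ i₀ → i ∉ S → x i = 0) (ht₀ : 0 < t i₀) (hmin : ∀ i, i ≠ L → t i₀ ≤ t i)
    (hS : ∀ i ∈ S, i ≠ L → t i₀ < t i) (hs : ∑ i, t i < 0) (hε : -∑ i, t i ≤ t i₀ / 8) :
    reducedForm t x i₀ S ≤ (1 + 1 / 8) * (∑ i, t i - t i₀) * x i₀ ^ 2 := by
  have hL₀ : L ≠ i₀ := ne_of_mem_of_not_mem hLS hi₀S
  have hKL : (insert i₀ S).erase L = insert i₀ (S.erase L) := erase_insert_of_ne hL₀.symm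
  have hsum := sum_erase_sub_le hi₀S hL₀ hj₀ hjL ht₀.le hmin
  have hsum₀ : 0 ≤ ∑ i ∈ S.erase L, (t i - t i₀) :=
    sum_nonneg fun i hi => sub_nonneg.mpr (hmin i (ne_of_mem_erase hi))
  obtain ⟨hd₀, hd₀'⟩ := top_weight_pos_and_le ht₀ hε
  have hw₀ : reducedWeight t i₀ i₀ = (1 + 1 / 8) * (∑ j, t j - t i₀) - (∑ j, t j - 2 * t i₀) :=
    if_pos rfl
  have hw : ∀ i ∈ S.erase L, 0 < reducedWeight t i₀ i
      ∧ t i ^ 2 / reducedWeight t i₀ i ≤ (t i - t i₀) / 2 := fun i hi => by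
    rw [reducedWeight, if_neg (ne_of_mem_of_not_mem (mem_of_mem_erase hi) hi₀S)]
    exact inner_weight_pos_and_le ht₀ (hS i (mem_of_mem_erase hi) (ne_of_mem_erase hi)) hs
  have hW : ∑ i ∈ S.erase L, t i ^ 2 / reducedWeight t i₀ i ≤ (∑ i, t i - t L - 2 * t i₀) / 2 :=
    calc ∑ i ∈ S.erase L, t i ^ 2 / reducedWeight t i₀ i
        ≤ ∑ i ∈ S.erase L, (t i - t i₀) / 2 := sum_le_sum fun i hi => (hw i hi).2
      _ ≤ _ := by rw [← sum_div]; linarith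
  have hW₀ : 0 ≤ ∑ i ∈ S.erase L, t i ^ 2 / reducedWeight t i₀ i :=
    sum_nonneg fun i hi => div_nonneg (sq_nonneg _) (hw i hi).1.le
  have ht₀d₀ := div_nonneg (sq_nonneg (t i₀)) hd₀.le
  rw [← sub_nonpos, reducedForm_sub_eq hi₀S hx, neg_nonpos]
  refine sum_mul_sq_add_sq_sum_div_nonneg (mem_insert_of_mem hLS) (neg_pos.mpr hs)
    (fun i hi => ?_) ?_
  · rw [hKL] at hi
    rcases mem_insert.mp hi with rfl | hi
    exacts [hw₀ ▸ hd₀, (hw i hi).1]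
  · rw [hKL, sum_insert fun h => hi₀S (mem_of_mem_erase h), hw₀, reducedWeight,
      if_neg hL₀, neg_neg]
    exact last_coeff_mul_le ht₀ (by linarith) hs (by linarith) (by linarith)

end ReducedForm

theorem reducedForm_inv_le {n m : ℕ} (hn : 3 ≤ n) {lam ξ : Fin n → ℝ} (hanti : Antitone lam)
    (hm : 1 ≤ m) (hmn : m ≤ n - 1)
    (hstrict : ∀ i : Fin n, (i : ℕ) = m → lam i < lam ⟨0, by omega⟩)
    (hpos : ∀ i : Fin n, i ≠ ⟨n - 1, by omega⟩ → 0 < lam i)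
    (hξ : ∀ i : Fin n, 0 < (i : ℕ) → (i : ℕ) < m → ξ i = 0)
    (hs : ∑ i, (lam i)⁻¹ < 0) (hε : -∑ i, (lam i)⁻¹ ≤ (lam ⟨0, by omega⟩)⁻¹ / 8) :
    reducedForm lam⁻¹ (lam⁻¹ * ξ) ⟨0, by omega⟩ (univ.filter fun i : Fin n => m ≤ (i : ℕ))
      ≤ (1 + 1 / 8) * (∑ i, lam⁻¹ i - lam⁻¹ ⟨0, by omega⟩) * (lam⁻¹ * ξ) ⟨0, by omega⟩ ^ 2 := by
  have hi₀L : (⟨0, by omega⟩ : Fin n) ≠ ⟨n - 1, by omega⟩ := by simp [Fin.ext_iff]; omega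
  refine reducedForm_le (L := ⟨n - 1, by omega⟩) (j := ⟨1, by omega⟩)
    ?_ ?_ ?_ ?_ ?_ ?_ ?_ ?_ hs hε
  · simp
    omega
  · simpa using hmn
  · simp [Fin.ext_iff]
  · simp [Fin.ext_iff]
    omega
  · intro i hi₀ hiS
    have hi : 0 < (i : ℕ) := Nat.pos_of_ne_zero fun h => hi₀ (Fin.ext h)
    simp [hξ i hi (by simpa using hiS)]
  · simpa using hpos _ hi₀L
  · intro i hi
    exact inv_anti₀ (hpos i hi) (hanti (Nat.zero_le _))
  · intro i hiS hi
    have hmi : m ≤ (i : ℕ) := (mem_filter.mp hiS).2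
    exact inv_strictAnti₀ (hpos i hi) ((hanti hmi).trans_lt (hstrict ⟨m, by omega⟩ rfl))

theorem stmt15 {n : ℕ} (hn : 3 ≤ n) (maxF : ℝ) :
    ∃ A : ℝ, 1 < A ∧ ∃ δ0 : ℝ, 0 < δ0 ∧
      ∀ (m : ℕ) (lam ξ : Fin n → ℝ),
        lam ∈ GardingCone n (n - 1) → Antitone lam →
        1 ≤ m → m ≤ n →
        (∀ i : Fin n, (i : ℕ) < m → lam i = lam ⟨0, by omega⟩) →
        (∀ i : Fin n, (i : ℕ) = m → lam i < lam ⟨0, by omega⟩) →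
        esym (n - 1) lam ≤ maxF →
        lam ⟨n - 1, by omega⟩ ≤ -A →
        (∀ i : Fin n, 0 < (i : ℕ) → (i : ℕ) < m → ξ i = 0) →
        -(∑ p : Fin n, ∑ q : Fin n,
              if p ≠ q then esym2 (n - 3) lam p q * ξ p * ξ q else 0)
          + (∑ i : Fin n, esym1 (n - 2) lam i * ξ i) ^ 2 / esym (n - 1) lam
          + 2 * ∑ i ∈ Finset.univ.filter (fun i : Fin n => m ≤ (i : ℕ)),
              esym1 (n - 2) lam i * ξ i ^ 2 / (lam ⟨0, by omega⟩ - lam i)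
        ≥ (1 + δ0) * esym1 (n - 2) lam ⟨0, by omega⟩ * ξ ⟨0, by omega⟩ ^ 2 /
            lam ⟨0, by omega⟩ := by
  refine ⟨max 2 (8 * maxF), one_lt_two.trans_le (le_max_left _ _), 1 / 8, by norm_num, ?_⟩
  intro m lam ξ hcone hanti hm1 hmn htop hstrict hF hA hξ
  set i₀ : Fin n := ⟨0, by omega⟩
  set L : Fin n := ⟨n - 1, by omega⟩
  -- `A ≥ 2` makes every `λ_i` with `i < n` exceed 1; `A ≥ 8 max F` makes `-s λ_1 ≤ 1/8`.
  have hA₂ := le_max_left 2 (8 * maxF)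
  have hA₈ := le_max_right 2 (8 * maxF)
  have hL : lam L < 0 := by linarith
  have hpos : ∀ i, i ≠ L → 0 < lam i := fun i hi => GardingCone.pos_of_nonpos hcone hi hL.le
  have hlam := ne_zero_of_one_neg hpos hL
  have hi₀L : i₀ ≠ L := by simp [i₀, L, Fin.ext_iff]; omega
  have hs := inv_sum_neg hpos hL (GardingCone.esym_pos hcone le_rfl)
  have hε := neg_inv_sum_le hpos (by linarith) hs hi₀L (by linarith)
  have hmL : m ≤ n - 1 := by
    by_contra h
    linarith [htop L (by simp only [L]; omega), hpos i₀ hi₀L]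
  rw [ge_iff_le, mul_esym1_mul_sq_div_eq (by omega) hlam,
    esym_form_eq_prod_mul_reducedForm hn hlam hs.ne]
  exact mul_le_mul_of_nonpos_left (reducedForm_inv_le hn hanti hm1 hmL hstrict hpos hξ hs hε)
    (prod_neg_of_one_neg hpos hL).le
end
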